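/- Let θ, φ ∈ ℝ and let σ_θ, σ_φ be the 2-cocycles on ℤ² given by σ_θ((m,n),(p,q)) = e^{2πi n p θ} and σ_φ((m,n),(p,q)) = e^{2πi n p φ}. Then σ_θ is cohomologous to σ_φ, i.e., there exists a map γ : ℤ² → 𝕋 such that σ_θ(x,y)·conj(σ_φ(x,y)) = γ(x)γ(y)·conj(γ(x+y)) for all x,y ∈ ℤ², if and only if θ − φ ∈ ℤ. -/
import Mathlib


noncomputable section

/-- The 2-cocycle `σ_θ((m,n),(p,q)) = e^{2πi n p θ}` on `ℤ²`. -/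
def rotationCocycle (θ : ℝ) (u v : ℤ × ℤ) : ℂ :=
  Complex.exp (2 * Real.pi * Complex.I * (u.2 : ℂ) * (v.1 : ℂ) * (θ : ℂ))

lemma conj_rotationCocycle (φ : ℝ) (u v : ℤ × ℤ) :
    (starRingEnd ℂ) (rotationCocycle φ u v)
      = Complex.exp (-(2 * Real.pi * Complex.I * (u.2 : ℂ) * (v.1 : ℂ) * (φ : ℂ))) := by
  rw [rotationCocycle, ← Complex.exp_conj]
  congr 1
  simp only [map_mul, Complex.conj_I, Complex.conj_ofReal, map_intCast, map_ofNat]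
  ring

/-- The cocycles `σ_θ` and `σ_φ` on `ℤ²` are cohomologous if and only if
`θ − φ ∈ ℤ`. -/
theorem rotationCocycle_cohomologous_iff (θ φ : ℝ) :
    (∃ γ : ℤ × ℤ → ℂ, (∀ x : ℤ × ℤ, ‖γ x‖ = 1) ∧
      ∀ x y : ℤ × ℤ,
        rotationCocycle θ x y * (starRingEnd ℂ) (rotationCocycle φ x y)
          = γ x * γ y * (starRingEnd ℂ) (γ (x + y))) ↔
    ∃ n : ℤ, θ - φ = n := by
  constructor
  · rintro ⟨γ, hγ, h⟩
    have h1 := h (0, 1) (1, 0)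
    have h2 := h (1, 0) (0, 1)
    rw [show ((1 : ℤ), (0 : ℤ)) + (0, 1) = (0, 1) + (1, 0) by simp [Prod.ext_iff],
      show γ (1, 0) * γ (0, 1) = γ (0, 1) * γ (1, 0) from mul_comm _ _] at h2
    have key : rotationCocycle θ (0, 1) (1, 0) *
        (starRingEnd ℂ) (rotationCocycle φ (0, 1) (1, 0))
        = rotationCocycle θ (1, 0) (0, 1) *
        (starRingEnd ℂ) (rotationCocycle φ (1, 0) (0, 1)) := by
      rw [h1, h2]
    rw [conj_rotationCocycle, conj_rotationCocycle, rotationCocycle, rotationCocycle,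
      ← Complex.exp_add, ← Complex.exp_add] at key
    simp only at key
    push_cast at key
    simp only [mul_zero, zero_mul, mul_one, one_mul, add_neg_cancel, neg_zero, add_zero,
      Complex.exp_zero] at key
    have key' : Complex.exp ((θ - φ : ℝ) * (2 * Real.pi * Complex.I)) = 1 := by
      rw [← key]; push_cast; ring_nf
    rw [Complex.exp_eq_one_iff] at key'
    obtain ⟨n, hn⟩ := key'
    refine ⟨n, ?_⟩
    have h2pi : (2 * Real.pi * Complex.I : ℂ) ≠ 0 := by
      simp [Real.pi_ne_zero, Complex.I_ne_zero]
    have := mul_right_cancel₀ h2pi hn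
    exact_mod_cast this
  · rintro ⟨n, hn⟩
    refine ⟨fun _ => 1, fun x => by simp, fun x y => ?_⟩
    rw [conj_rotationCocycle, rotationCocycle, ← Complex.exp_add]
    have : 2 * Real.pi * Complex.I * (x.2 : ℂ) * (y.1 : ℂ) * (θ : ℂ) +
        -(2 * Real.pi * Complex.I * (x.2 : ℂ) * (y.1 : ℂ) * (φ : ℂ))
        = ((x.2 * y.1 * n : ℤ) : ℂ) * (2 * Real.pi * Complex.I) := by
      have : (θ : ℂ) = (φ : ℂ) + (n : ℂ) := by
        have : θ = φ + n := by linarith [hn]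
        exact_mod_cast congrArg (Complex.ofReal) this
      rw [this]; push_cast; ring
    rw [this, Complex.exp_int_mul_two_pi_mul_I]
    simp
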